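/- Let X be a finite set, let A be an abelian subgroup of Sym(X), and let Ā be the 2-orbit-closure of A (a subgroup of Sym(X) containing A and having the same orbits on X as A). Then an orbit O of A is isolated with respect to A if and only if O is isolated with respect to Ā. -/
import Mathlib


/-- The orbit of a point `x` under a set `G` of permutations of `X`. -/
def orbitOf {X : Type*} (G : Set (Equiv.Perm X)) (x : X) : Set X :=
  {y | ∃ a ∈ G, a x = y}

/-- A permutation `σ` is 2-orbit-compatible with `G` if for every pair of orbits
`O` and `Q` of `G` there is an element of `G` agreeing with `σ` on `O ∪ Q`. -/
def TwoOrbitCompatible {X : Type*} (G : Set (Equiv.Perm X)) (σ : Equiv.Perm X) : Prop :=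
  ∀ x y : X, ∃ a ∈ G, ∀ z ∈ orbitOf G x ∪ orbitOf G y, σ z = a z

/-- A subgroup `A ≤ Sym(X)` is 2-orbit-closed if every permutation that is
2-orbit-compatible with `A` belongs to `A`. -/
def TwoOrbitClosed {X : Type*} (A : Subgroup (Equiv.Perm X)) : Prop :=
  ∀ σ : Equiv.Perm X, TwoOrbitCompatible (A : Set (Equiv.Perm X)) σ → σ ∈ A

/-- An orbit `O` is isolated with respect to `G` if for every orbit `Q ≠ O` the factor
group `G_O / G_O^Q` is an elementary abelian 2-group, i.e. `O` is adjacent to no other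
orbit: for every `a ∈ G`, the restriction of `a²` to `O` is the restriction of some
element of `G` fixing `Q` pointwise. -/
def IsolatedWrt {X : Type*} (G : Set (Equiv.Perm X)) (O : Set X) : Prop :=
  ∀ y : X, orbitOf G y ≠ O →
    ∀ a ∈ G, ∃ b ∈ G, (∀ z ∈ O, b z = a (a z)) ∧ ∀ z ∈ orbitOf G y, b z = z

/-- For an abelian subgroup `A ≤ Sym(X)` with 2-orbit-closure `Ā` (the set of all
permutations 2-orbit-compatible with `A`), an orbit `O` of `A` is isolated with
respect to `A` iff `O` is isolated with respect to `Ā`. -/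
theorem statement8 (X : Type*) [Fintype X] (A : Subgroup (Equiv.Perm X))
    (hab : ∀ a ∈ A, ∀ b ∈ A, a * b = b * a) (x : X) :
    IsolatedWrt (A : Set (Equiv.Perm X)) (orbitOf (A : Set (Equiv.Perm X)) x) ↔
      IsolatedWrt {σ : Equiv.Perm X | TwoOrbitCompatible (A : Set (Equiv.Perm X)) σ}
        (orbitOf (A : Set (Equiv.Perm X)) x) := by
  have hsub : ∀ a ∈ A, TwoOrbitCompatible (A : Set (Equiv.Perm X)) a := by
    intro a ha x y
    exact ⟨a, ha, fun z _ => rfl⟩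
  have hmem : ∀ y : X, y ∈ orbitOf (A : Set (Equiv.Perm X)) y :=
    fun y => ⟨1, A.one_mem, rfl⟩
  have horb : ∀ y : X,
      orbitOf {σ : Equiv.Perm X | TwoOrbitCompatible (A : Set (Equiv.Perm X)) σ} y
        = orbitOf (A : Set (Equiv.Perm X)) y := by
    intro y
    ext w
    constructor
    · rintro ⟨σ, hσ, rfl⟩
      obtain ⟨a, ha, hag⟩ := hσ y y
      rw [hag y (Or.inl (hmem y))]
      exact ⟨a, ha, rfl⟩
    · rintro ⟨a, ha, rfl⟩
      exact ⟨a, hsub a ha, rfl⟩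
  have hstab : ∀ a ∈ A, ∀ z ∈ orbitOf (A : Set (Equiv.Perm X)) x,
      a z ∈ orbitOf (A : Set (Equiv.Perm X)) x := by
    rintro a ha z ⟨c, hc, rfl⟩
    exact ⟨a * c, A.mul_mem ha hc, rfl⟩
  constructor
  · intro h y hy σ hσ
    rw [horb] at hy
    obtain ⟨a, ha, hag⟩ := hσ x y
    obtain ⟨b, hb, hbO, hbQ⟩ := h y hy a ha
    refine ⟨b, hsub b hb, ?_, ?_⟩
    · intro z hz
      rw [hbO z hz, hag z (Or.inl hz), hag (a z) (Or.inl (hstab a ha z hz))]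
    · intro z hz
      rw [horb] at hz
      exact hbQ z hz
  · intro h y hy a ha
    have hy' : orbitOf {σ : Equiv.Perm X | TwoOrbitCompatible (A : Set (Equiv.Perm X)) σ} y
        ≠ orbitOf (A : Set (Equiv.Perm X)) x := by
      rw [horb]; exact hy
    obtain ⟨b, hb, hbO, hbQ⟩ := h y hy' a (hsub a ha)
    obtain ⟨a', ha', hag⟩ := hb x y
    refine ⟨a', ha', ?_, ?_⟩
    · intro z hz
      rw [← hag z (Or.inl hz)]
      exact hbO z hz
    · intro z hz
      rw [← hag z (Or.inr hz)]
      exact hbQ z (by rw [horb]; exact hz)
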